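/- Let n ≥ 1 and let λ₁, …, λₙ ∈ [−1, 1] satisfy λ₁ + ⋯ + λₙ = 0. For t ∈ ℝ define S(t) = Σᵢ (λᵢ − tanh t)/(1 − λᵢ·tanh t) (each denominator is positive). Then S(t) ≤ 0 for every t > 0 and S(t) ≥ 0 for every t < 0; moreover, for t ≠ 0 one has S(t) = 0 if and only if |λᵢ| = 1 for every i = 1, …, n. -/
import Mathlib

open Real

lemma my_abs_tanh_lt_one (t : ℝ) : |Real.tanh t| < 1 := by
  rw [Real.tanh_eq_sinh_div_cosh, abs_div, abs_of_pos (Real.cosh_pos t),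
    div_lt_one (Real.cosh_pos t)]
  nlinarith [Real.cosh_sq t, Real.cosh_pos t, abs_nonneg (Real.sinh t),
    sq_abs (Real.sinh t), abs_nonneg (Real.sinh t)]

lemma my_tanh_pos {t : ℝ} (ht : 0 < t) : 0 < Real.tanh t := by
  rw [Real.tanh_eq_sinh_div_cosh]
  exact div_pos (Real.sinh_pos_iff.2 ht) (Real.cosh_pos t)

lemma my_denom_pos {l u : ℝ} (hl : l ∈ Set.Icc (-1:ℝ) 1) (hu : |u| < 1) :
    0 < 1 - l * u := by
  have h1 : |l| ≤ 1 := abs_le.2 ⟨hl.1, hl.2⟩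
  have : |l * u| < 1 := by
    rw [abs_mul]
    calc |l| * |u| ≤ 1 * |u| := by gcongr
    _ = |u| := one_mul _
    _ < 1 := hu
  linarith [(abs_lt.1 this).2]

lemma my_key (n : ℕ) (lam : Fin n → ℝ)
    (hlam : ∀ i, lam i ∈ Set.Icc (-1 : ℝ) 1)
    (hsum : ∑ i, lam i = 0) (u : ℝ) (hu : |u| < 1) :
    ∑ i, (lam i - u) / (1 - lam i * u)
      = u * ∑ i, (lam i ^ 2 - 1) / (1 - lam i * u) := by
  have h : ∀ i, (lam i - u) / (1 - lam i * u)
      = lam i + u * ((lam i ^ 2 - 1) / (1 - lam i * u)) := by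
    intro i
    have hd := my_denom_pos (hlam i) hu
    field_simp
    ring
  rw [Finset.sum_congr rfl fun i _ => h i, Finset.sum_add_distrib, hsum,
    ← Finset.mul_sum, zero_add]

/-- If `λ₁,…,λₙ ∈ [-1,1]` sum to zero, then the sum
`S t = Σᵢ (λᵢ - tanh t)/(1 - λᵢ tanh t)` is `≤ 0` for `t > 0`, `≥ 0` for `t < 0`, and for
`t ≠ 0` it vanishes exactly when all `|λᵢ| = 1`. -/
theorem stmt_1 (n : ℕ) (hn : 1 ≤ n) (lam : Fin n → ℝ)
    (hlam : ∀ i, lam i ∈ Set.Icc (-1 : ℝ) 1)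
    (hsum : ∑ i, lam i = 0)
    (S : ℝ → ℝ)
    (hS : ∀ t, S t = ∑ i, (lam i - Real.tanh t) / (1 - lam i * Real.tanh t)) :
    (∀ t : ℝ, 0 < t → S t ≤ 0) ∧
    (∀ t : ℝ, t < 0 → 0 ≤ S t) ∧
    (∀ t : ℝ, t ≠ 0 → (S t = 0 ↔ ∀ i, |lam i| = 1)) := by
  have hfac : ∀ t : ℝ, S t = Real.tanh t *
      ∑ i, (lam i ^ 2 - 1) / (1 - lam i * Real.tanh t) := fun t => by
    rw [hS t, my_key n lam hlam hsum _ (my_abs_tanh_lt_one t)]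
  have hterm : ∀ t : ℝ, ∀ i,
      (lam i ^ 2 - 1) / (1 - lam i * Real.tanh t) ≤ 0 := fun t i => by
    have hd := my_denom_pos (hlam i) (my_abs_tanh_lt_one t)
    have h1 : lam i ^ 2 ≤ 1 := by nlinarith [(hlam i).1, (hlam i).2]
    exact div_nonpos_of_nonpos_of_nonneg (by linarith) hd.le
  have hTle : ∀ t : ℝ,
      (∑ i, (lam i ^ 2 - 1) / (1 - lam i * Real.tanh t)) ≤ 0 := fun t =>
    Finset.sum_nonpos (fun i _ => hterm t i)
  refine ⟨fun t ht => ?_, fun t ht => ?_, fun t ht => ?_⟩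
  · rw [hfac t]
    exact mul_nonpos_of_nonneg_of_nonpos (my_tanh_pos ht).le (hTle t)
  · rw [hfac t]
    have : 0 < Real.tanh (-t) := my_tanh_pos (by linarith)
    rw [Real.tanh_neg] at this
    nlinarith [hTle t]
  · have hu : Real.tanh t ≠ 0 := by
      rcases lt_or_gt_of_ne ht with h | h
      · have : 0 < Real.tanh (-t) := my_tanh_pos (by linarith)
        rw [Real.tanh_neg] at this; linarith
      · exact (my_tanh_pos h).ne'
    rw [hfac t, mul_eq_zero, or_iff_right hu,
      Finset.sum_eq_zero_iff_of_nonpos (fun i _ => hterm t i)]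
    constructor
    · intro h i
      have h0 := h i (Finset.mem_univ i)
      have hd := my_denom_pos (hlam i) (my_abs_tanh_lt_one t)
      have hnum : lam i ^ 2 - 1 = 0 := by
        rcases div_eq_zero_iff.1 h0 with h' | h'
        · exact h'
        · linarith
      have h2 : (lam i - 1) * (lam i + 1) = 0 := by ring_nf; linarith
      rcases mul_eq_zero.1 h2 with h' | h'
      · have : lam i = 1 := by linarith
        rw [this]; simp
      · have : lam i = -1 := by linarith
        rw [this]; simp
    · intro h i _
      have h2 : lam i ^ 2 = 1 := by
        have := h i
        nlinarith [sq_abs (lam i)]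
      rw [h2]
      simp
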